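/- Let δ > 0 and set f_ν(z) = z/2 + δ·(−1)^ν on the unit disk (with δ < 1/2). Then the sequence L_ν(0) = δ·(−1)^ν·Σ_{j=0}^{ν}(−1/2)^j does not converge; in particular the left iterated function system {L_ν} does not converge pointwise. -/

import Mathlib

/-!
Unrolling the recursion gives `L_ν(0) = (-1)^ν · δ s_{ν+1}` with `s_N` the partial sums of the
geometric series in `-1/2`. Since `δ s_{ν+1} → 2δ/3 ≠ 0`, the even and odd subsequences of
`L_ν(0)` tend to the distinct limits `±2δ/3`.
-/

open Filter Topology Complex Finset

/-- Left iterated function system: `LFS f ν = f ν ∘ f (ν-1) ∘ ⋯ ∘ f 0`. -/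
def LFS (f : ℕ → ℂ → ℂ) : ℕ → ℂ → ℂ
  | 0 => f 0
  | n + 1 => f (n + 1) ∘ LFS f n

theorem LFS_apply_zero_of_affine_alternating (r δ : ℂ) (f : ℕ → ℂ → ℂ)
    (hf : ∀ ν z, f ν z = r * z + δ * (-1) ^ ν) (ν : ℕ) :
    LFS f ν 0 = δ * (-1) ^ ν * ∑ j ∈ range (ν + 1), (-r) ^ j := by
  induction ν with
  | zero => simp [LFS, hf]
  | succ n ih =>
    rw [LFS, Function.comp_apply, hf, ih, geom_sum_succ (n := n + 1)]
    ring

theorem tendsto_two_mul_atTop : Tendsto (fun n : ℕ => 2 * n) atTop atTop :=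
  tendsto_atTop_mono (fun n => show n ≤ 2 * n by omega) tendsto_id

theorem tendsto_two_mul_add_one_atTop : Tendsto (fun n : ℕ => 2 * n + 1) atTop atTop :=
  tendsto_atTop_mono (fun n => show n ≤ 2 * n + 1 by omega) tendsto_id

theorem not_tendsto_of_tendsto_even_odd {X : Type*} [TopologicalSpace X] [T2Space X]
    {u : ℕ → X} {a b : X} (hab : a ≠ b) (heven : Tendsto (fun n => u (2 * n)) atTop (𝓝 a))
    (hodd : Tendsto (fun n => u (2 * n + 1)) atTop (𝓝 b)) :
    ¬ ∃ c, Tendsto u atTop (𝓝 c) := by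
  rintro ⟨c, hc⟩
  exact hab <| (tendsto_nhds_unique heven (hc.comp tendsto_two_mul_atTop)).trans
    (tendsto_nhds_unique (hc.comp tendsto_two_mul_add_one_atTop) hodd)

theorem not_tendsto_neg_one_pow_mul {R : Type*} [Ring R] [TopologicalSpace R]
    [IsTopologicalRing R] [T2Space R] [NoZeroDivisors R] [CharZero R]
    {s : ℕ → R} {S : R} (hS : S ≠ 0) (hs : Tendsto s atTop (𝓝 S)) :
    ¬ ∃ c, Tendsto (fun n => (-1) ^ n * s n) atTop (𝓝 c) := by
  refine not_tendsto_of_tendsto_even_odd (self_ne_neg.mpr hS) ?_ ?_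
  · simpa [Function.comp_def, pow_mul] using hs.comp tendsto_two_mul_atTop
  · simpa [Function.comp_def, pow_succ, pow_mul] using
      (hs.comp tendsto_two_mul_add_one_atTop).neg

theorem stmt11_general (δ : ℝ) (hδ0 : 0 < δ)
    (f : ℕ → ℂ → ℂ) (hf : ∀ ν z, f ν z = z / 2 + (δ : ℂ) * (-1 : ℂ) ^ ν) :
    (∀ ν, LFS f ν 0 =
        (δ : ℂ) * (-1 : ℂ) ^ ν * ∑ j ∈ Finset.range (ν + 1), (-(1 / 2) : ℂ) ^ j) ∧
      ¬ ∃ c : ℂ, Tendsto (fun ν => LFS f ν 0) atTop (𝓝 c) := by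
  have closed_form := LFS_apply_zero_of_affine_alternating (1 / 2) δ f fun ν z => by rw [hf]; ring
  refine ⟨closed_form, ?_⟩
  have hgeom : Tendsto (fun N => ∑ j ∈ range (N + 1), (-(1 / 2) : ℂ) ^ j) atTop
      (𝓝 (1 - -(1 / 2))⁻¹) :=
    (tendsto_add_atTop_iff_nat 1).2
      (hasSum_geometric_of_norm_lt_one (by norm_num)).tendsto_sum_nat
  have hlim : (δ : ℂ) * (1 - -(1 / 2))⁻¹ ≠ 0 :=
    mul_ne_zero (by exact_mod_cast hδ0.ne') (by norm_num)
  have hsplit : (fun ν => LFS f ν 0) =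
      fun ν => (-1) ^ ν * ((δ : ℂ) * ∑ j ∈ range (ν + 1), (-(1 / 2) : ℂ) ^ j) :=
    funext fun ν => by rw [closed_form]; ring
  rw [hsplit]
  exact not_tendsto_neg_one_pow_mul hlim (hgeom.const_mul _)

/-- For `f_ν(z) = z/2 + δ(−1)^ν` with `0 < δ < 1/2`, one has
`L_ν(0) = δ(−1)^ν ∑_{j=0}^{ν} (−1/2)^j`, and the sequence `L_ν(0)` does not converge;
in particular the left iterated function system does not converge pointwise. -/
theorem stmt11 (δ : ℝ) (hδ0 : 0 < δ) (hδ : δ < 1 / 2)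
    (f : ℕ → ℂ → ℂ) (hf : ∀ ν z, f ν z = z / 2 + (δ : ℂ) * (-1 : ℂ) ^ ν) :
    (∀ ν, LFS f ν 0 =
        (δ : ℂ) * (-1 : ℂ) ^ ν * ∑ j ∈ Finset.range (ν + 1), (-(1 / 2) : ℂ) ^ j) ∧
      ¬ ∃ c : ℂ, Tendsto (fun ν => LFS f ν 0) atTop (𝓝 c) :=
  stmt11_general δ hδ0 f hf
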